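/- arXiv:2111.03190 — 7 statements merged into one kernel-verified Lean document; each statement's English description precedes it below -/
import Mathlib

section
/- For every θ ∈ [π/2, 3π/2], the quantity f(θ) = (2/3)(2 − cos θ − cos²θ) satisfies 4/3 ≤ f(θ) ≤ 3/2. Moreover f(π) = 4/3 and f(2π/3) = 3/2, so both bounds are attained. -/
open Real

theorem stmt_1 :
    (∀ θ ∈ Set.Icc (π / 2) (3 * π / 2),
      4 / 3 ≤ (2 / 3) * (2 - cos θ - cos θ ^ 2) ∧
      (2 / 3) * (2 - cos θ - cos θ ^ 2) ≤ 3 / 2) ∧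
    (2 / 3) * (2 - cos π - cos π ^ 2) = 4 / 3 ∧
    (2 / 3) * (2 - cos (2 * π / 3) - cos (2 * π / 3) ^ 2) = 3 / 2 := by
  refine ⟨fun θ hθ => ?_, by rw [Real.cos_pi]; ring, ?_⟩
  · obtain ⟨h1, h2⟩ := hθ
    have hc0 : cos θ ≤ 0 :=
      Real.cos_nonpos_of_pi_div_two_le_of_le h1 (by linarith)
    have hc1 : -1 ≤ cos θ := neg_one_le_cos θ
    constructor <;> nlinarith [sq_nonneg (cos θ + 1/2), mul_nonneg (neg_nonneg.mpr hc0) (by linarith : (0:ℝ) ≤ cos θ + 1)]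
  · have : cos (2 * π / 3) = -(1/2) := by
      have : (2 * π / 3) = π - π/3 := by ring
      rw [this, Real.cos_pi_sub, Real.cos_pi_div_three]
    rw [this]; ring
end

section
/- Define μ(ω) = sup_{θ ∈ [π/2, 3π/2]} |1 − ω · (2/3)(2 − cos θ − cos²θ)| for ω ∈ ℝ. Then μ(12/17) = 1/17, and μ(ω) > 1/17 for every real ω ≠ 12/17. In other words, the optimal smoothing factor of the element-wise additive Vanka relaxation for the 1D Laplacian is 1/17, uniquely achieved at the damping parameter ω = 12/17. -/
open Real Set

theorem stmt_2 :
    sSup ((fun θ : ℝ => |1 - (12 / 17) * ((2 / 3) * (2 - cos θ - cos θ ^ 2))|) ''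
        Icc (π / 2) (3 * π / 2)) = 1 / 17 ∧
    ∀ ω : ℝ, ω ≠ 12 / 17 →
      1 / 17 < sSup ((fun θ : ℝ => |1 - ω * ((2 / 3) * (2 - cos θ - cos θ ^ 2))|) ''
        Icc (π / 2) (3 * π / 2)) := by
  have hpi : (0:ℝ) < π := Real.pi_pos
  have hmem2 : (2 * π / 3) ∈ Icc (π / 2) (3 * π / 2) := by
    constructor <;> [linarith; linarith]
  have hmem1 : (π / 2) ∈ Icc (π / 2) (3 * π / 2) := by
    constructor <;> [linarith; linarith]
  have hcos23 : cos (2 * π / 3) = -(1/2) := by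
    rw [show (2 * π / 3) = π - π / 3 by ring, Real.cos_pi_sub, Real.cos_pi_div_three]
  have hcosrange : ∀ θ ∈ Icc (π / 2) (3 * π / 2), -1 ≤ cos θ ∧ cos θ ≤ 0 := by
    intro θ hθ
    refine ⟨Real.neg_one_le_cos θ, ?_⟩
    exact Real.cos_nonpos_of_pi_div_two_le_of_le hθ.1 (by linarith [hθ.2])
  constructor
  · apply IsGreatest.csSup_eq
    constructor
    · exact ⟨π / 2, hmem1, by simp [Real.cos_pi_div_two]; norm_num⟩
    · rintro y ⟨θ, hθ, rfl⟩
      obtain ⟨h1, h2⟩ := hcosrange θ hθ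
      rw [abs_le]
      constructor <;> nlinarith [sq_nonneg (cos θ + 1/2), sq_nonneg (cos θ)]
  · intro ω hω
    by_contra h
    push_neg at h
    have hbdd : BddAbove ((fun θ : ℝ => |1 - ω * ((2 / 3) * (2 - cos θ - cos θ ^ 2))|) ''
        Icc (π / 2) (3 * π / 2)) := by
      apply IsCompact.bddAbove
      apply isCompact_Icc.image
      continuity
    have e1 : |1 - ω * (4/3)| ≤ 1/17 := by
      refine le_trans (le_csSup hbdd ⟨π / 2, hmem1, ?_⟩) h
      simp [Real.cos_pi_div_two]; norm_num
    have e2 : |1 - ω * (3/2)| ≤ 1/17 := by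
      refine le_trans (le_csSup hbdd ⟨2 * π / 3, hmem2, ?_⟩) h
      simp only [hcos23]; norm_num
    rw [abs_le] at e1 e2
    exact hω (by linarith [e1.1, e2.2])
end

section
/- Define g(x) = (2/3)(1 − x)((x + 1)² + 1) for x ∈ [−1, 0]. Then 100/81 ≤ g(x) ≤ 4/3 for all x ∈ [−1, 0], with the minimum attained at x = −2/3 (where g(−2/3) = 100/81 = (10/9)²) and the maximum attained at both x = 0 and x = −1 (where g equals 4/3). -/
theorem stmt_3 :
    (∀ x ∈ Set.Icc (-1 : ℝ) 0,
      100 / 81 ≤ (2 / 3) * (1 - x) * ((x + 1) ^ 2 + 1) ∧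
      (2 / 3) * (1 - x) * ((x + 1) ^ 2 + 1) ≤ 4 / 3) ∧
    (2 / 3 : ℝ) * (1 - (-2 / 3)) * ((-2 / 3 + 1) ^ 2 + 1) = 100 / 81 ∧
    (100 / 81 : ℝ) = (10 / 9) ^ 2 ∧
    (2 / 3 : ℝ) * (1 - 0) * ((0 + 1) ^ 2 + 1) = 4 / 3 ∧
    (2 / 3 : ℝ) * (1 - (-1)) * ((-1 + 1) ^ 2 + 1) = 4 / 3 := by
  refine ⟨fun x hx => ⟨?_, ?_⟩, by norm_num, by norm_num, by norm_num, by norm_num⟩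
  · obtain ⟨h1, h2⟩ := hx
    nlinarith [sq_nonneg (x + 2/3), sq_nonneg (x + 1), sq_nonneg x, mul_nonneg (mul_nonneg (neg_nonneg.2 h2) (neg_nonneg.2 h2)) (neg_nonneg.2 h2)]
  · obtain ⟨h1, h2⟩ := hx
    nlinarith [sq_nonneg (x + 1), sq_nonneg x, mul_nonneg (neg_nonneg.2 h2) (by linarith : (0:ℝ) ≤ x + 1)]
end

section
/- Define μ(ω) = sup_{θ ∈ [π/2, 3π/2]} |1 − ω · (2/3)(1 − cos θ)((cos θ + 1)² + 1)| for ω ∈ ℝ. Then μ(81/104) = 1/26, and μ(ω) > 1/26 for every real ω ≠ 81/104. In other words, the optimal smoothing factor of the vertex-wise additive Vanka relaxation for the 1D Laplacian is 1/26, uniquely achieved at the damping parameter ω = 81/104. -/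
open Real Set

theorem stmt_4 :
    sSup ((fun θ : ℝ => |1 - (81 / 104) * ((2 / 3) * (1 - cos θ) * ((cos θ + 1) ^ 2 + 1))|) ''
        Icc (π / 2) (3 * π / 2)) = 1 / 26 ∧
    ∀ ω : ℝ, ω ≠ 81 / 104 →
      1 / 26 < sSup ((fun θ : ℝ => |1 - ω * ((2 / 3) * (1 - cos θ) * ((cos θ + 1) ^ 2 + 1))|) ''
        Icc (π / 2) (3 * π / 2)) := by
  have hpi : (0:ℝ) < π := Real.pi_pos
  have hπmem : π ∈ Icc (π/2) (3*π/2) := ⟨by linarith, by linarith⟩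
  have hcosπ : Real.cos π = -1 := Real.cos_pi
  have hbdd : ∀ ω : ℝ, BddAbove ((fun θ : ℝ =>
      |1 - ω * ((2 / 3) * (1 - cos θ) * ((cos θ + 1) ^ 2 + 1))|) '' Icc (π/2) (3*π/2)) := by
    intro ω
    exact (isCompact_Icc.image (by continuity)).bddAbove
  -- arccos (-2/3) facts
  have hmem2 : Real.arccos (-2/3) ∈ Icc (π/2) (3*π/2) := by
    constructor
    · rw [Real.arccos]
      have : Real.arcsin (-2/3) ≤ 0 := Real.arcsin_nonpos.mpr (by norm_num)
      linarith
    · have := Real.arccos_le_pi (-2/3)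
      linarith
  have hcos2 : Real.cos (Real.arccos (-2/3)) = -2/3 :=
    Real.cos_arccos (by norm_num) (by norm_num)
  constructor
  · apply le_antisymm
    · apply csSup_le (Set.Nonempty.image _ ⟨π, hπmem⟩)
      rintro x ⟨θ, hθ, rfl⟩
      have hc1 : -1 ≤ Real.cos θ := Real.neg_one_le_cos θ
      have hc0 : Real.cos θ ≤ 0 := by
        apply Real.cos_nonpos_of_pi_div_two_le_of_le hθ.1
        have := hθ.2; linarith
      rw [abs_le]
      constructor
      · nlinarith [mul_nonneg (sq_nonneg (Real.cos θ)) (by linarith : (0:ℝ) ≤ Real.cos θ + 1)]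
      · nlinarith [mul_nonneg (sq_nonneg (Real.cos θ + 2/3)) (by linarith : (0:ℝ) ≤ 1/3 - Real.cos θ)]
    · apply le_csSup (hbdd _)
      exact ⟨π, hπmem, by simp only [hcosπ]; norm_num⟩
  · intro ω hω
    rcases lt_or_gt_of_ne hω with h | h
    · -- use θ = arccos (-2/3), value |1 - ω * 100/81|
      have hval : (fun θ : ℝ => |1 - ω * ((2 / 3) * (1 - cos θ) * ((cos θ + 1) ^ 2 + 1))|)
          (Real.arccos (-2/3)) = |1 - ω * (100/81)| := by
        simp only [hcos2]; norm_num
      have hlt : 1/26 < |1 - ω * (100/81)| := by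
        have : 1/26 < 1 - ω * (100/81) := by nlinarith
        exact lt_of_lt_of_le this (le_abs_self _)
      calc (1:ℝ)/26 < |1 - ω * (100/81)| := hlt
        _ ≤ _ := le_csSup (hbdd _) ⟨_, hmem2, hval⟩
    · have hval : (fun θ : ℝ => |1 - ω * ((2 / 3) * (1 - cos θ) * ((cos θ + 1) ^ 2 + 1))|)
          π = |1 - ω * (4/3)| := by
        simp only [hcosπ]; norm_num
      have hlt : 1/26 < |1 - ω * (4/3)| := by
        have : 1/26 < -(1 - ω * (4/3)) := by nlinarith
        exact lt_of_lt_of_le this (neg_le_abs _)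
      calc (1:ℝ)/26 < |1 - ω * (4/3)| := hlt
        _ ≤ _ := le_csSup (hbdd _) ⟨_, hπmem, hval⟩
end

section
/- Let T₂^high = [−π/2, 3π/2)² \ [−π/2, π/2)². For every (θ₁, θ₂) ∈ T₂^high, the quantity g(θ₁,θ₂) = (1/12)(7 + 2(cos θ₁ + cos θ₂) + cos θ₁ cos θ₂)(2 − cos θ₁ − cos θ₂) satisfies 3/4 ≤ g(θ₁,θ₂) ≤ 4/3. Moreover g(π, π) = 4/3 and g(0, π/2) = 3/4, so both bounds are attained on T₂^high. -/
open Real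

def T2high : Set (ℝ × ℝ) :=
  (Set.Ico (-(π / 2)) (3 * π / 2) ×ˢ Set.Ico (-(π / 2)) (3 * π / 2)) \
    (Set.Ico (-(π / 2)) (π / 2) ×ˢ Set.Ico (-(π / 2)) (π / 2))

noncomputable def gE2 (θ : ℝ × ℝ) : ℝ :=
  (1 / 12) * (7 + 2 * (cos θ.1 + cos θ.2) + cos θ.1 * cos θ.2) * (2 - cos θ.1 - cos θ.2)

lemma key (x y : ℝ) (hx1 : -1 ≤ x) (hx2 : x ≤ 1) (hy1 : -1 ≤ y) (hy2 : y ≤ 1)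
    (h : x ≤ 0 ∨ y ≤ 0) :
    9 ≤ (7 + 2 * (x + y) + x * y) * (2 - x - y) ∧
      (7 + 2 * (x + y) + x * y) * (2 - x - y) ≤ 16 := by
  rcases h with h | h
  · constructor
    · nlinarith [mul_nonneg (sub_nonneg.2 hy2) (neg_nonneg.2 h), sq_nonneg (x + y),
        sq_nonneg (x - y), sq_nonneg x, sq_nonneg y, mul_nonneg (add_nonneg (by linarith : (0:ℝ) ≤ x + 1) (by linarith : (0:ℝ) ≤ y + 1)) (neg_nonneg.2 h)]
    · nlinarith [sq_nonneg (x - y), mul_nonneg (mul_nonneg (by linarith : (0:ℝ) ≤ 1 + x) (by linarith : (0:ℝ) ≤ 1 + y)) (by linarith : (0:ℝ) ≤ x + y + 2)]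
  · constructor
    · nlinarith [mul_nonneg (sub_nonneg.2 hx2) (neg_nonneg.2 h), sq_nonneg (x + y),
        sq_nonneg (x - y), sq_nonneg x, sq_nonneg y, mul_nonneg (add_nonneg (by linarith : (0:ℝ) ≤ x + 1) (by linarith : (0:ℝ) ≤ y + 1)) (neg_nonneg.2 h)]
    · nlinarith [sq_nonneg (x - y), mul_nonneg (mul_nonneg (by linarith : (0:ℝ) ≤ 1 + x) (by linarith : (0:ℝ) ≤ 1 + y)) (by linarith : (0:ℝ) ≤ x + y + 2)]

theorem stmt_5 :
    (∀ θ ∈ T2high, 3 / 4 ≤ gE2 θ ∧ gE2 θ ≤ 4 / 3) ∧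
    (π, π) ∈ T2high ∧ gE2 (π, π) = 4 / 3 ∧
    ((0 : ℝ), π / 2) ∈ T2high ∧ gE2 (0, π / 2) = 3 / 4 := by
  have hπ := pi_pos
  refine ⟨?_, ?_, ?_, ?_, ?_⟩
  · rintro ⟨a, b⟩ ⟨⟨⟨ha1, ha2⟩, ⟨hb1, hb2⟩⟩, hnot⟩
    have hca1 := neg_one_le_cos a
    have hca2 := cos_le_one a
    have hcb1 := neg_one_le_cos b
    have hcb2 := cos_le_one b
    have h : cos a ≤ 0 ∨ cos b ≤ 0 := by
      simp only [Set.mem_prod, Set.mem_Ico, not_and_or, not_lt, not_le] at hnot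
      rcases hnot with h | h
      · rcases h with h | h
        · linarith
        · left
          exact cos_nonpos_of_pi_div_two_le_of_le h (by linarith)
      · rcases h with h | h
        · linarith
        · right
          exact cos_nonpos_of_pi_div_two_le_of_le h (by linarith)
    obtain ⟨h1, h2⟩ := key (cos a) (cos b) hca1 hca2 hcb1 hcb2 h
    constructor <;> simp only [gE2] <;> nlinarith
  · constructor
    · constructor <;> constructor <;> simp <;> linarith
    · simp only [Set.mem_prod, Set.mem_Ico, not_and_or, not_lt, not_le]
      left; right; linarith
  · simp [gE2]; norm_num
  · constructor
    · constructor <;> constructor <;> simp <;> linarith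
    · simp only [Set.mem_prod, Set.mem_Ico, not_and_or, not_lt, not_le]
      right; right; linarith
  · simp [gE2]; norm_num
end

section
/- Let T₂^high = [−π/2, 3π/2)² \ [−π/2, π/2)². Define μ(ω) = sup_{(θ₁,θ₂) ∈ T₂^high} |1 − ω · (2/9)(2 + cos θ₁)(2 + cos θ₂)(2 − cos θ₁ − cos θ₂)| for ω ∈ ℝ. Then μ(3/4) = 1/3, and μ(ω) > 1/3 for every real ω ≠ 3/4. In other words, the optimal smoothing factor of the mass-based relaxation (using the bilinear finite element mass operator) for the 2D Laplacian is 1/3, uniquely achieved at ω = 3/4. -/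
/-!
On the high frequencies at least one of `cos θ₁`, `cos θ₂` is nonpositive, and this confines the
symbol `(2/9)(2 + cos θ₁)(2 + cos θ₂)(2 − cos θ₁ − cos θ₂)` to `[8/9, 16/9]`, both ends being
attained, at `(π, π)` and at `(π/2, π/2)`. As `x ↦ |1 − ωx|` is convex, its supremum over the
symbol values is taken at the ends: `μ(ω) = max |1 − 8ω/9| |1 − 16ω/9|`. This is minimised where the
two ends equioscillate, `1 − 8ω/9 = 16ω/9 − 1`, that is at `ω = 3/4`, with value `1/3`.
-/

open Real

noncomputable def muMass2 (ω : ℝ) : ℝ :=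
  sSup ((fun θ : ℝ × ℝ =>
    |1 - ω * ((2 / 9) * (2 + cos θ.1) * (2 + cos θ.2) * (2 - cos θ.1 - cos θ.2))|) '' T2high)

open Set

-- The symbol of `muMass2` as a polynomial in `a = cos θ₁`, `b = cos θ₂`.
noncomputable def massLaplaceSymbol (a b : ℝ) : ℝ := 2 / 9 * (2 + a) * (2 + b) * (2 - a - b)

lemma massLaplaceSymbol_comm (a b : ℝ) : massLaplaceSymbol a b = massLaplaceSymbol b a := by
  unfold massLaplaceSymbol
  ring

-- AM-GM: the three factors `2 + a`, `2 + b`, `2 - a - b` are nonnegative with sum `6`.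
lemma massLaplaceSymbol_le {a b : ℝ} (ha : a ∈ Icc (-1) 1) (hb : b ∈ Icc (-1) 1) :
    massLaplaceSymbol a b ≤ 16 / 9 := by
  obtain ⟨ha₁, ha₂⟩ := ha
  obtain ⟨hb₁, hb₂⟩ := hb
  unfold massLaplaceSymbol
  nlinarith [sq_nonneg (a - b), sq_nonneg (a + b), sq_nonneg (2 * a + b), sq_nonneg (a + 2 * b),
    mul_nonneg (by linarith : (0 : ℝ) ≤ 2 - a - b) (sq_nonneg (a - b))]

lemma le_massLaplaceSymbol {a b : ℝ} (ha : a ∈ Icc (-1) 0) (hb : b ∈ Icc (-1) 1) :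
    8 / 9 ≤ massLaplaceSymbol a b := by
  obtain ⟨ha₁, ha₂⟩ := ha
  obtain ⟨hb₁, hb₂⟩ := hb
  unfold massLaplaceSymbol
  nlinarith [mul_nonneg (by linarith : (0 : ℝ) ≤ -a) (by linarith : (0 : ℝ) ≤ 1 - b),
    mul_nonneg (by linarith : (0 : ℝ) ≤ a + 1) (by linarith : (0 : ℝ) ≤ b + 1)]

lemma massLaplaceSymbol_mem_Icc {a b : ℝ} (ha : a ∈ Icc (-1) 1) (hb : b ∈ Icc (-1) 1)
    (hab : a ≤ 0 ∨ b ≤ 0) : massLaplaceSymbol a b ∈ Icc (8 / 9) (16 / 9) := by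
  refine ⟨?_, massLaplaceSymbol_le ha hb⟩
  rcases hab with ha₀ | hb₀
  · exact le_massLaplaceSymbol ⟨ha.1, ha₀⟩ hb
  · exact massLaplaceSymbol_comm a b ▸ le_massLaplaceSymbol ⟨hb.1, hb₀⟩ ha

lemma cos_nonpos_of_mem_Ico_of_notMem_Ico {t : ℝ} (ht : t ∈ Ico (-(π / 2)) (3 * π / 2))
    (ht' : t ∉ Ico (-(π / 2)) (π / 2)) : cos t ≤ 0 := by
  have hπt : π / 2 ≤ t := not_lt.1 fun h => ht' ⟨ht.1, h⟩
  exact cos_nonpos_of_pi_div_two_le_of_le hπt (by linarith [ht.2])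

lemma cos_nonpos_or_cos_nonpos_of_mem_T2high {θ : ℝ × ℝ} (hθ : θ ∈ T2high) :
    cos θ.1 ≤ 0 ∨ cos θ.2 ≤ 0 := by
  obtain ⟨⟨hθ₁, hθ₂⟩, hlow⟩ := hθ
  rw [mem_prod, not_and_or] at hlow
  exact hlow.imp (cos_nonpos_of_mem_Ico_of_notMem_Ico hθ₁) (cos_nonpos_of_mem_Ico_of_notMem_Ico hθ₂)

lemma mapsTo_massLaplaceSymbol_T2high :
    MapsTo (fun θ : ℝ × ℝ => massLaplaceSymbol (cos θ.1) (cos θ.2)) T2high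
      (Icc (8 / 9) (16 / 9)) := fun _ hθ =>
  massLaplaceSymbol_mem_Icc ⟨neg_one_le_cos _, cos_le_one _⟩ ⟨neg_one_le_cos _, cos_le_one _⟩
    (cos_nonpos_or_cos_nonpos_of_mem_T2high hθ)

lemma pi_pi_mem_T2high : (π, π) ∈ T2high :=
  ⟨⟨⟨by linarith [pi_pos], by linarith [pi_pos]⟩, by linarith [pi_pos], by linarith [pi_pos]⟩,
    fun h => by linarith [h.1.2, pi_pos]⟩

lemma pi_div_two_pi_div_two_mem_T2high : (π / 2, π / 2) ∈ T2high :=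
  ⟨⟨⟨by linarith [pi_pos], by linarith [pi_pos]⟩, by linarith [pi_pos], by linarith [pi_pos]⟩,
    fun h => lt_irrefl _ h.1.2⟩

lemma abs_one_sub_mul_le_max {m M x : ℝ} (ω : ℝ) (hx : x ∈ Icc m M) :
    |1 - ω * x| ≤ max |1 - ω * m| |1 - ω * M| := by
  rcases le_total 0 ω with hω | hω
  · rw [max_comm]
    exact abs_le_max_abs_abs (by nlinarith [hx.2]) (by nlinarith [hx.1])
  · exact abs_le_max_abs_abs (by nlinarith [hx.1]) (by nlinarith [hx.2])

lemma sSup_image_abs_one_sub_mul {α : Type*} {S : Set α} {g : α → ℝ} {m M : ℝ}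
    (hg : MapsTo g S (Icc m M)) (hm : m ∈ g '' S) (hM : M ∈ g '' S) (ω : ℝ) :
    sSup ((fun θ => |1 - ω * g θ|) '' S) = max |1 - ω * m| |1 - ω * M| := by
  refine IsGreatest.csSup_eq ⟨?_, ?_⟩
  · obtain ⟨θm, hθm, rfl⟩ := hm
    obtain ⟨θM, hθM, rfl⟩ := hM
    rcases max_choice |1 - ω * g θm| |1 - ω * g θM| with h | h <;> rw [h]
    exacts [mem_image_of_mem _ hθm, mem_image_of_mem _ hθM]
  · rintro _ ⟨θ, hθ, rfl⟩
    exact abs_one_sub_mul_le_max ω (hg hθ)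

lemma muMass2_eq (ω : ℝ) : muMass2 ω = max |1 - ω * (8 / 9)| |1 - ω * (16 / 9)| := by
  have h₈ : (8 / 9 : ℝ) ∈ (fun θ : ℝ × ℝ => massLaplaceSymbol (cos θ.1) (cos θ.2)) '' T2high :=
    ⟨_, pi_pi_mem_T2high, by norm_num [massLaplaceSymbol]⟩
  have h₁₆ : (16 / 9 : ℝ) ∈ (fun θ : ℝ × ℝ => massLaplaceSymbol (cos θ.1) (cos θ.2)) '' T2high :=
    ⟨_, pi_div_two_pi_div_two_mem_T2high, by norm_num [massLaplaceSymbol]⟩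
  exact sSup_image_abs_one_sub_mul mapsTo_massLaplaceSymbol_T2high h₈ h₁₆ ω

theorem stmt_8 :
    muMass2 (3 / 4) = 1 / 3 ∧ ∀ ω : ℝ, ω ≠ 3 / 4 → 1 / 3 < muMass2 ω := by
  simp only [muMass2_eq]
  refine ⟨by norm_num, fun ω hω => ?_⟩
  rcases hω.lt_or_gt with h | h
  · exact lt_max_of_lt_left (lt_abs.2 (Or.inl (by linarith)))
  · exact lt_max_of_lt_right (lt_abs.2 (Or.inr (by linarith)))
end

section
/- Let h > 0 be real and θ₁, θ₂ ∈ ℝ. Over ℂ, let A be the 4×4 matrix (1/h²)·[[4, −1, −1, 0], [−1, 4, 0, −1], [−1, 0, 4, −1], [0, −1, −1, 4]], let Φ = diag(1, e^{iθ₁}, e^{iθ₂}, e^{i(θ₁+θ₂)}), let W = (1/4)·I₄, and let V be the 4×1 column vector of ones. Then A is invertible with A⁻¹ = h²·[[7/24, 1/12, 1/12, 1/24], [1/12, 7/24, 1/24, 1/12], [1/12, 1/24, 7/24, 1/12], [1/24, 1/12, 1/12, 7/24]], and the 1×1 matrix Vᵀ W Φ* A⁻¹ Φ V (where Φ* is the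 conjugate transpose of Φ) has its unique entry equal to (h²/24)(7 + 2(cos θ₁ + cos θ₂) + cos θ₁ cos θ₂). -/
/-!
Writing `u = e^{iθ₁}`, `v = e^{iθ₂}`, the vector `ΦV = (1, u, v, uv)` is `(1, u) ⊗ (1, v)`, and
`24 A⁻¹ / h² = 7 I ⊗ I + 2 (X ⊗ I + I ⊗ X) + X ⊗ X` with `X` the 2 × 2 swap. Since
`(1, u)* (1, u) = 2` and `(1, u)* X (1, u) = u + ū = 2 cos θ₁` for `|u| = 1`, the sesquilinear
form factorizes and gives `(28 + 8 (cos θ₁ + cos θ₂) + 4 cos θ₁ cos θ₂) / 24` before the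
weight `1/4` and the scale `h²`.
-/

open Matrix Complex

noncomputable def A18 (h : ℝ) : Matrix (Fin 4) (Fin 4) ℂ :=
  (1 / (h ^ 2 : ℂ)) • !![4, -1, -1, 0; -1, 4, 0, -1; -1, 0, 4, -1; 0, -1, -1, 4]

noncomputable def Phi18 (θ₁ θ₂ : ℝ) : Matrix (Fin 4) (Fin 4) ℂ :=
  diagonal ![1, exp (I * θ₁), exp (I * θ₂), exp (I * (θ₁ + θ₂))]

noncomputable def W18 : Matrix (Fin 4) (Fin 4) ℂ := (1 / 4 : ℂ) • 1

def V18 : Matrix (Fin 4) (Fin 1) ℂ := fun _ _ => 1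

open ComplexConjugate

theorem ones_sandwich_diagonal_apply
    {R n : Type*} [CommSemiring R] [StarRing R] [Fintype n] [DecidableEq n]
    (c : R) (B : Matrix n n R) (φ : n → R) :
    ((of fun _ _ => 1 : Matrix n (Fin 1) R)ᵀ * (c • 1 : Matrix n n R) * (diagonal φ)ᴴ * B *
      diagonal φ * (of fun _ _ => 1 : Matrix n (Fin 1) R)) 0 0 = c * (star φ ⬝ᵥ B *ᵥ φ) := by
  rw [dotProduct_mulVec]
  simp [mul_apply, dotProduct, vecMul, Finset.mul_sum, diagonal_conjTranspose, diagonal_apply]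

section Patch

variable {K : Type*} [Field K]

def patchLaplacian : Matrix (Fin 4) (Fin 4) K :=
  !![4, -1, -1, 0; -1, 4, 0, -1; -1, 0, 4, -1; 0, -1, -1, 4]

def patchLaplacianInv : Matrix (Fin 4) (Fin 4) K :=
  !![7/24, 1/12, 1/12, 1/24;
     1/12, 7/24, 1/24, 1/12;
     1/12, 1/24, 7/24, 1/12;
     1/24, 1/12, 1/12, 7/24]

theorem patchLaplacian_mul_patchLaplacianInv [CharZero K] :
    (patchLaplacian : Matrix (Fin 4) (Fin 4) K) * patchLaplacianInv = 1 := by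
  ext i j
  fin_cases i <;> fin_cases j <;>
    simp [patchLaplacian, patchLaplacianInv, mul_apply, Fin.sum_univ_four, one_apply] <;> norm_num

theorem inv_smul_patchLaplacian_mul_smul_patchLaplacianInv [CharZero K] {c : K} (hc : c ≠ 0) :
    (c⁻¹ • patchLaplacian : Matrix (Fin 4) (Fin 4) K) * c • patchLaplacianInv = 1 := by
  rw [smul_mul_smul_comm, inv_mul_cancel₀ hc, one_smul, patchLaplacian_mul_patchLaplacianInv]

end Patch

theorem star_dotProduct_patchLaplacianInv_mulVec {u v : ℂ} (hu : ‖u‖ = 1) (hv : ‖v‖ = 1) :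
    star ![1, u, v, u * v] ⬝ᵥ patchLaplacianInv *ᵥ ![1, u, v, u * v] =
      (7 + 2 * (u.re + v.re) + u.re * v.re) / 6 := by
  have conj_mul_self {z : ℂ} (hz : ‖z‖ = 1) : conj z * z = 1 := by rw [conj_mul', hz]; norm_num
  have conj_add_self (z : ℂ) : conj z + z = 2 * z.re := by rw [add_comm, add_conj]; push_cast; ring
  simp only [patchLaplacianInv, dotProduct, mulVec, Fin.sum_univ_four, Pi.star_apply, of_apply,
    cons_val', cons_val_zero, cons_val_one, cons_val, cons_val_fin_one, RCLike.star_def, map_mul,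
    map_one]
  linear_combination (1 / 24 : ℂ) *
    ((7 + 7 * conj v * v + 2 * (v + conj v)) * conj_mul_self hu +
      (14 + 2 * (u + conj u)) * conj_mul_self hv +
      (4 + 2 * (v.re : ℂ)) * conj_add_self u + (4 + u + conj u) * conj_add_self v)

theorem stmt_18 (h θ₁ θ₂ : ℝ) (hh : 0 < h) :
    IsUnit (A18 h) ∧
    (A18 h)⁻¹ = (h ^ 2 : ℂ) •
      !![7/24, 1/12, 1/12, 1/24;
         1/12, 7/24, 1/24, 1/12;
         1/12, 1/24, 7/24, 1/12;
         1/24, 1/12, 1/12, 7/24] ∧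
    (V18ᵀ * W18 * (Phi18 θ₁ θ₂)ᴴ * (A18 h)⁻¹ * Phi18 θ₁ θ₂ * V18) 0 0 =
      ((h ^ 2 : ℂ) / 24) * (7 + 2 * ((Real.cos θ₁ : ℂ) + (Real.cos θ₂ : ℂ)) +
        (Real.cos θ₁ : ℂ) * (Real.cos θ₂ : ℂ)) := by
  have hh2 : (h ^ 2 : ℂ) ≠ 0 := pow_ne_zero 2 (ofReal_ne_zero.mpr hh.ne')
  have hmul : A18 h * (h ^ 2 : ℂ) • patchLaplacianInv = 1 := by
    rw [A18, one_div]
    exact inv_smul_patchLaplacian_mul_smul_patchLaplacianInv hh2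
  have hinv := inv_eq_right_inv hmul
  refine ⟨.of_mul_eq_one _ hmul, hinv, ?_⟩
  have hPhi : Phi18 θ₁ θ₂ =
      diagonal ![1, exp (θ₁ * I), exp (θ₂ * I), exp (θ₁ * I) * exp (θ₂ * I)] := by
    rw [Phi18, ← exp_add]; ring_nf
  rw [hinv, hPhi]
  refine (ones_sandwich_diagonal_apply (1 / 4) _ _).trans ?_
  rw [smul_mulVec, dotProduct_smul, smul_eq_mul,
    star_dotProduct_patchLaplacianInv_mulVec (norm_exp_ofReal_mul_I θ₁) (norm_exp_ofReal_mul_I θ₂),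
    exp_ofReal_mul_I_re, exp_ofReal_mul_I_re]
  ring
end
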